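/- arXiv:1712.02573 — 6 statements merged into one kernel-verified Lean document; each statement's English description precedes it below -/
import Mathlib

section
/- For any parameter μ with 0 < μ < n, the set K = {X ∈ Sym(n,ℝ) : (tr X)² - μ·tr(X²) ≥ 0 and tr X ≥ 0} is closed under addition: if X₁, X₂ ∈ K then X₁ + X₂ ∈ K. -/
/-!
Expanding the square, `(tr (X₁ + X₂))² - μ tr ((X₁ + X₂)²)` is the sum of the two nonnegative
defects `(tr Xᵢ)² - μ tr (Xᵢ²)` and of `2 (tr X₁ tr X₂ - μ tr (X₁ X₂))`. For symmetric matrices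
`tr (X₁ X₂)` is the Frobenius inner product, so by Cauchy–Schwarz
`(μ tr (X₁ X₂))² ≤ μ tr (X₁²) · μ tr (X₂²) ≤ (tr X₁ tr X₂)²`, and the cross term is nonnegative
because `tr X₁ tr X₂ ≥ 0`.
-/

namespace Matrix

variable {n R : Type*} [Fintype n]

theorem IsSymm.trace_mul_eq_sum [AddCommMonoid R] [Mul R] {A B : Matrix n n R} (hB : B.IsSymm) :
    (A * B).trace = ∑ p : n × n, A p.1 p.2 * B p.1 p.2 := by
  simp only [trace, diag, mul_apply, Fintype.sum_prod_type, hB.apply]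

theorem trace_add_sq [DecidableEq n] [CommRing R] (A B : Matrix n n R) :
    ((A + B) ^ 2).trace = (A ^ 2).trace + 2 * (A * B).trace + (B ^ 2).trace := by
  rw [sq, add_mul, mul_add, mul_add, trace_add, trace_add, trace_add, trace_mul_comm B A, sq, sq]
  ring

section Ordered

variable [DecidableEq n] [CommRing R] [LinearOrder R] [IsStrictOrderedRing R]

theorem IsSymm.trace_sq_nonneg {A : Matrix n n R} (hA : A.IsSymm) : 0 ≤ (A ^ 2).trace := by
  rw [sq, hA.trace_mul_eq_sum]
  exact Finset.sum_nonneg fun _ _ => mul_self_nonneg _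

theorem IsSymm.trace_mul_sq_le {A B : Matrix n n R} (hA : A.IsSymm) (hB : B.IsSymm) :
    (A * B).trace ^ 2 ≤ (A ^ 2).trace * (B ^ 2).trace := by
  rw [sq A, sq B, hB.trace_mul_eq_sum, hA.trace_mul_eq_sum, hB.trace_mul_eq_sum]
  simpa only [sq] using Finset.sum_mul_sq_le_sq_mul_sq Finset.univ _ _

theorem IsSymm.mul_trace_mul_le {A B : Matrix n n R} (hA : A.IsSymm) (hB : B.IsSymm) {μ : R}
    (hμ : 0 ≤ μ) (hAμ : μ * (A ^ 2).trace ≤ A.trace ^ 2) (hBμ : μ * (B ^ 2).trace ≤ B.trace ^ 2)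
    (hAt : 0 ≤ A.trace) (hBt : 0 ≤ B.trace) :
    μ * (A * B).trace ≤ A.trace * B.trace := by
  have hsq : (μ * (A * B).trace) ^ 2 ≤ (A.trace * B.trace) ^ 2 :=
    calc (μ * (A * B).trace) ^ 2 = μ ^ 2 * (A * B).trace ^ 2 := by ring
      _ ≤ μ ^ 2 * ((A ^ 2).trace * (B ^ 2).trace) := by gcongr; exact hA.trace_mul_sq_le hB
      _ = (μ * (A ^ 2).trace) * (μ * (B ^ 2).trace) := by ring
      _ ≤ A.trace ^ 2 * B.trace ^ 2 :=
        mul_le_mul hAμ hBμ (mul_nonneg hμ hB.trace_sq_nonneg) (sq_nonneg _)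
      _ = (A.trace * B.trace) ^ 2 := by ring
  exact (abs_le_of_sq_le_sq' hsq (mul_nonneg hAt hBt)).2

end Ordered

end Matrix

theorem stmt0_general (n : ℕ) (μ : ℝ) (hμ0 : 0 < μ)
    (X₁ X₂ : Matrix (Fin n) (Fin n) ℝ)
    (hX₁ : X₁.IsSymm) (hX₂ : X₂.IsSymm)
    (h₁ : (X₁.trace) ^ 2 - μ * (X₁ ^ 2).trace ≥ 0) (h₁t : X₁.trace ≥ 0)
    (h₂ : (X₂.trace) ^ 2 - μ * (X₂ ^ 2).trace ≥ 0) (h₂t : X₂.trace ≥ 0) :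
    ((X₁ + X₂).trace) ^ 2 - μ * ((X₁ + X₂) ^ 2).trace ≥ 0 ∧ (X₁ + X₂).trace ≥ 0 := by
  have hcross : μ * (X₁ * X₂).trace ≤ X₁.trace * X₂.trace :=
    hX₁.mul_trace_mul_le hX₂ hμ0.le (by linarith) (by linarith) h₁t h₂t
  rw [Matrix.trace_add, Matrix.trace_add_sq]
  constructor
  · linear_combination h₁ + h₂ + 2 * hcross
  · linarith

/-- For 0 < μ < n, the set
`K = {X ∈ Sym(n,ℝ) : (tr X)² - μ·tr(X²) ≥ 0 and tr X ≥ 0}` is closed under addition. -/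
theorem stmt0 (n : ℕ) (μ : ℝ) (hμ0 : 0 < μ) (hμn : μ < n)
    (X₁ X₂ : Matrix (Fin n) (Fin n) ℝ)
    (hX₁ : X₁.IsSymm) (hX₂ : X₂.IsSymm)
    (h₁ : (X₁.trace) ^ 2 - μ * (X₁ ^ 2).trace ≥ 0) (h₁t : X₁.trace ≥ 0)
    (h₂ : (X₂.trace) ^ 2 - μ * (X₂ ^ 2).trace ≥ 0) (h₂t : X₂.trace ≥ 0) :
    ((X₁ + X₂).trace) ^ 2 - μ * ((X₁ + X₂) ^ 2).trace ≥ 0 ∧ (X₁ + X₂).trace ≥ 0 :=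
  stmt0_general n μ hμ0 X₁ X₂ hX₁ hX₂ h₁ h₁t h₂ h₂t
end

section
/- Let μ ∈ (0,n) and let K_Λ^μ = {λ ∈ ℝⁿ : (∑ᵢ λᵢ)² - μ·∑ᵢ λᵢ² ≥ 0 and ∑ᵢ λᵢ ≥ 0}. Then the dual cone of K_Λ^μ with respect to the standard inner product on ℝⁿ equals K_Λ^{n-μ}. -/
/-!
Write `s x = ∑ᵢ xᵢ`, `q x = ∑ᵢ xᵢ²` and `D x = n q x - (s x)²`, so that `D x ≥ 0` measures how far
`x` is from the diagonal. Then `x ∈ K^μ` iff `s x ≥ 0` and `μ D x ≤ (n - μ) (s x)²`, and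
`n ⟨x, y⟩ - s x s y` is, up to the factor `n`, the inner product of the centered vectors, hence
bounded by `√(D x D y)` (Cauchy–Schwarz). Multiplying the defining inequalities of `K^μ` and
`K^{n-μ}` gives `D x D y ≤ (s x s y)²`, so `⟨x, y⟩ ≥ 0`. Conversely the test vectors
`1` and `(a + s y) 1 - n y` with `a² = μ D y / (n - μ)` lie in `K^μ` and force `y ∈ K^{n-μ}`.
-/

open Finset

namespace QuadraticCone

variable {ι : Type*} [Fintype ι]

def cone (μ : ℝ) : Set (ι → ℝ) :=
  {x | (∑ i, x i) ^ 2 - μ * ∑ i, (x i) ^ 2 ≥ 0 ∧ ∑ i, x i ≥ 0}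

def dispersion (x : ι → ℝ) : ℝ :=
  Fintype.card ι * ∑ i, x i ^ 2 - (∑ i, x i) ^ 2

theorem dispersion_nonneg (x : ι → ℝ) : 0 ≤ dispersion x :=
  sub_nonneg.mpr (by simpa using sq_sum_le_card_mul_sum_sq (s := univ) (f := x))

theorem mem_cone_iff [Nonempty ι] {μ : ℝ} {x : ι → ℝ} :
    x ∈ cone μ ↔
      μ * dispersion x ≤ (Fintype.card ι - μ) * (∑ i, x i) ^ 2 ∧ 0 ≤ ∑ i, x i := by
  have hn : (0 : ℝ) < Fintype.card ι := by exact_mod_cast Fintype.card_pos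
  have key : μ * dispersion x - (Fintype.card ι - μ) * (∑ i, x i) ^ 2 =
      -(Fintype.card ι * ((∑ i, x i) ^ 2 - μ * ∑ i, x i ^ 2)) := by
    unfold dispersion; ring
  rw [cone, Set.mem_ofPred_eq, ← sub_nonpos, key, neg_nonpos, ge_iff_le, ge_iff_le,
    mul_nonneg_iff_of_pos_left hn]

theorem dispersion_affine (x : ι → ℝ) (a c : ℝ) :
    dispersion (fun i => a + c * x i) = c ^ 2 * dispersion x := by
  have hsq : ∀ i, (a + c * x i) ^ 2 = a ^ 2 + 2 * a * c * x i + c ^ 2 * x i ^ 2 := fun i => by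
    ring
  simp only [dispersion, hsq, sum_add_distrib, ← mul_sum, sum_const, card_univ, nsmul_eq_mul]
  ring

theorem sum_centered_mul_centered (x y : ι → ℝ) :
    ∑ i, (Fintype.card ι * x i - ∑ j, x j) * (Fintype.card ι * y i - ∑ j, y j) =
      Fintype.card ι * (Fintype.card ι * ∑ i, x i * y i - (∑ i, x i) * ∑ i, y i) := by
  have hmul : ∀ i, (Fintype.card ι * x i - ∑ j, x j) * (Fintype.card ι * y i - ∑ j, y j) =
      (Fintype.card ι : ℝ) ^ 2 * (x i * y i) - Fintype.card ι * (∑ j, y j) * x i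
        - Fintype.card ι * (∑ j, x j) * y i + (∑ j, x j) * ∑ j, y j := fun i => by
    ring
  simp only [hmul, sum_add_distrib, sum_sub_distrib, ← mul_sum, sum_const, card_univ,
    nsmul_eq_mul]
  ring

theorem sq_sum_mul_sub_le_dispersion_mul (x y : ι → ℝ) :
    (Fintype.card ι * ∑ i, x i * y i - (∑ i, x i) * ∑ i, y i) ^ 2 ≤
      dispersion x * dispersion y := by
  rcases isEmpty_or_nonempty ι with hι | hι
  · simp [dispersion]
  have hcs := sum_mul_sq_le_sq_mul_sq univ
    (fun i => Fintype.card ι * x i - ∑ j, x j) (fun i => Fintype.card ι * y i - ∑ j, y j)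
  simp only [sum_centered_mul_centered] at hcs
  have hdisp : ∀ z : ι → ℝ,
      ∑ i, (Fintype.card ι * z i - ∑ j, z j) ^ 2 = Fintype.card ι * dispersion z := fun z => by
    simp only [sq, sum_centered_mul_centered, dispersion]
  rw [hdisp, hdisp, mul_pow, mul_mul_mul_comm, ← sq] at hcs
  exact le_of_mul_le_mul_left hcs (by positivity)

theorem sum_mul_nonneg_of_mem_cone {μ : ℝ} (hμ0 : 0 < μ) (hμn : μ < Fintype.card ι)
    {x y : ι → ℝ} (hx : x ∈ cone μ) (hy : y ∈ cone (Fintype.card ι - μ)) :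
    0 ≤ ∑ i, y i * x i := by
  have : Nonempty ι := Fintype.card_pos_iff.mp (by exact_mod_cast hμ0.trans hμn)
  have hn : (0 : ℝ) < Fintype.card ι := by exact_mod_cast Fintype.card_pos
  have hnμ : 0 < (Fintype.card ι : ℝ) - μ := sub_pos.mpr hμn
  obtain ⟨hx, hsx⟩ := mem_cone_iff.mp hx
  obtain ⟨hy, hsy⟩ := mem_cone_iff.mp hy
  rw [sub_sub_cancel] at hy
  have hprod : dispersion x * dispersion y ≤ ((∑ i, x i) * ∑ i, y i) ^ 2 := by
    refine le_of_mul_le_mul_left ?_ (mul_pos hμ0 hnμ)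
    calc μ * (Fintype.card ι - μ) * (dispersion x * dispersion y)
        = μ * dispersion x * ((Fintype.card ι - μ) * dispersion y) := by ring
      _ ≤ (Fintype.card ι - μ) * (∑ i, x i) ^ 2 * (μ * (∑ i, y i) ^ 2) :=
        mul_le_mul hx hy (mul_nonneg hnμ.le (dispersion_nonneg y)) (by positivity)
      _ = μ * (Fintype.card ι - μ) * ((∑ i, x i) * ∑ i, y i) ^ 2 := by ring
  have hcs := (sq_sum_mul_sub_le_dispersion_mul x y).trans hprod
  have hnP : 0 ≤ Fintype.card ι * ∑ i, x i * y i := by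
    linarith [(abs_le_of_sq_le_sq' hcs (mul_nonneg hsx hsy)).1]
  simp_rw [mul_comm (y _)]
  exact nonneg_of_mul_nonneg_right hnP hn

theorem const_one_mem_cone {μ : ℝ} (hμn : μ ≤ Fintype.card ι) :
    (fun _ : ι => (1 : ℝ)) ∈ cone μ := by
  simp only [cone, Set.mem_ofPred_eq, sum_const, card_univ, nsmul_eq_mul, mul_one, one_pow]
  constructor <;> nlinarith

theorem mem_cone_of_mem_dual {μ : ℝ} (hμ0 : 0 < μ) (hμn : μ < Fintype.card ι) {y : ι → ℝ}
    (hy : ∀ x ∈ cone μ, 0 ≤ ∑ i, y i * x i) : y ∈ cone (Fintype.card ι - μ) := by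
  have : Nonempty ι := Fintype.card_pos_iff.mp (by exact_mod_cast hμ0.trans hμn)
  have hn : (0 : ℝ) < Fintype.card ι := by exact_mod_cast Fintype.card_pos
  have hnμ : 0 < (Fintype.card ι : ℝ) - μ := sub_pos.mpr hμn
  set S := ∑ i, y i
  have hS : 0 ≤ S := by simpa using hy _ (const_one_mem_cone hμn.le)
  set a := √(μ * dispersion y / (Fintype.card ι - μ))
  have ha : a ^ 2 = μ * dispersion y / (Fintype.card ι - μ) :=
    Real.sq_sqrt (div_nonneg (mul_nonneg hμ0.le (dispersion_nonneg y)) hnμ.le)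
  set x : ι → ℝ := fun i => (a + S) + -(Fintype.card ι : ℝ) * y i
  have hsx : ∑ i, x i = Fintype.card ι * a := by
    simp only [x, sum_add_distrib, ← mul_sum, sum_const, card_univ, nsmul_eq_mul]
    ring
  have hx : x ∈ cone μ := by
    rw [mem_cone_iff, dispersion_affine, hsx]
    refine ⟨?_, mul_nonneg hn.le (Real.sqrt_nonneg _)⟩
    rw [mul_pow, ha, neg_sq, mul_left_comm (_ - μ), mul_div_cancel₀ _ hnμ.ne', mul_left_comm]
  have hyx : ∑ i, y i * x i = a * S - dispersion y := by
    simp only [x, S, dispersion, mul_add, sum_add_distrib, ← sum_mul]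
    simp only [mul_left_comm (y _), ← mul_sum, ← sq]
    ring
  have hDa : dispersion y ≤ a * S := by linarith [hy x hx]
  rw [mem_cone_iff, sub_sub_cancel]
  refine ⟨?_, hS⟩
  rcases (dispersion_nonneg y).eq_or_lt with hD | hD
  · rw [← hD, mul_zero]; positivity
  refine le_of_mul_le_mul_right ?_ hD
  calc (Fintype.card ι - μ) * dispersion y * dispersion y
      = (Fintype.card ι - μ) * dispersion y ^ 2 := by ring
    _ ≤ (Fintype.card ι - μ) * (a * S) ^ 2 :=
      mul_le_mul_of_nonneg_left (pow_le_pow_left₀ hD.le hDa 2) hnμ.le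
    _ = μ * S ^ 2 * dispersion y := by
      rw [mul_pow, ha]; field_simp

theorem dual_cone_eq {μ : ℝ} (hμ0 : 0 < μ) (hμn : μ < Fintype.card ι) :
    {y : ι → ℝ | ∀ x ∈ cone μ, 0 ≤ ∑ i, y i * x i} = cone (Fintype.card ι - μ) :=
  Set.ext fun _ =>
    ⟨mem_cone_of_mem_dual hμ0 hμn, fun hy _ hx => sum_mul_nonneg_of_mem_cone hμ0 hμn hx hy⟩

end QuadraticCone

theorem stmt3_general (n : ℕ) (μ : ℝ) (hμ0 : 0 < μ) (hμn : μ < n) :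
    {y : Fin n → ℝ |
        ∀ x ∈ {x : Fin n → ℝ |
          (∑ i, x i) ^ 2 - μ * ∑ i, (x i) ^ 2 ≥ 0 ∧ ∑ i, x i ≥ 0},
          0 ≤ ∑ i, y i * x i} =
      {y : Fin n → ℝ |
        (∑ i, y i) ^ 2 - ((n : ℝ) - μ) * ∑ i, (y i) ^ 2 ≥ 0 ∧ ∑ i, y i ≥ 0} := by
  have := QuadraticCone.dual_cone_eq (ι := Fin n) hμ0 (by rwa [Fintype.card_fin])
  rwa [Fintype.card_fin] at this

/-- For μ ∈ (0,n) and n ≥ 2, the dual cone of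
`K_Λ^μ = {λ ∈ ℝⁿ : (∑ᵢ λᵢ)² - μ·∑ᵢ λᵢ² ≥ 0, ∑ᵢ λᵢ ≥ 0}`
with respect to the standard inner product equals `K_Λ^{n-μ}`. -/
theorem stmt3 (n : ℕ) (hn : 2 ≤ n) (μ : ℝ) (hμ0 : 0 < μ) (hμn : μ < n) :
    {y : Fin n → ℝ |
        ∀ x ∈ {x : Fin n → ℝ |
          (∑ i, x i) ^ 2 - μ * ∑ i, (x i) ^ 2 ≥ 0 ∧ ∑ i, x i ≥ 0},
          0 ≤ ∑ i, y i * x i} =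
      {y : Fin n → ℝ |
        (∑ i, y i) ^ 2 - ((n : ℝ) - μ) * ∑ i, (y i) ^ 2 ≥ 0 ∧ ∑ i, y i ≥ 0} :=
  stmt3_general n μ hμ0 hμn
end

section
/- The spectral cone K_Λ^μ = {λ ∈ ℝⁿ : (∑ᵢ λᵢ)² - μ·∑ᵢ λᵢ² ≥ 0, ∑ᵢ λᵢ ≥ 0} is self-dual with respect to the standard inner product on ℝⁿ if and only if μ = n/2. -/
open Finset

/-- Centered sum-of-squares identity. -/
lemma sumsq_center {n : ℕ} (hn : 0 < n) (x : Fin n → ℝ) :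
    ∑ i, (x i - (∑ j, x j) / n) ^ 2 = ∑ i, (x i) ^ 2 - (∑ i, x i) ^ 2 / n := by
  have hn' : (n : ℝ) ≠ 0 := by positivity
  have h1 : ∀ i : Fin n, (x i - (∑ j, x j) / n) ^ 2
      = (x i) ^ 2 - (2 * ((∑ j, x j) / n)) * x i + ((∑ j, x j) / n) ^ 2 :=
    fun i => by ring
  rw [Finset.sum_congr rfl fun i _ => h1 i]
  rw [Finset.sum_add_distrib, Finset.sum_sub_distrib, Finset.sum_const,
    ← Finset.mul_sum, Finset.card_univ, Fintype.card_fin]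
  field_simp
  have hnn : (n:ℝ)^2 * ((n:ℝ)⁻¹)^2 = 1 := by rw [← mul_pow, mul_inv_cancel₀ hn', one_pow]
  linear_combination ((∑ j, x j)^2) * hnn

/-- Centered inner-product identity. -/
lemma sum_center {n : ℕ} (hn : 0 < n) (x y : Fin n → ℝ) :
    ∑ i, (x i - (∑ j, x j) / n) * (y i - (∑ j, y j) / n)
      = ∑ i, x i * y i - (∑ i, x i) * (∑ i, y i) / n := by
  have hn' : (n : ℝ) ≠ 0 := by positivity
  have h1 : ∀ i : Fin n, (x i - (∑ j, x j) / n) * (y i - (∑ j, y j) / n)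
      = x i * y i - ((∑ j, x j) / n) * y i - ((∑ j, y j) / n) * x i
        + ((∑ j, x j) / n) * ((∑ j, y j) / n) := fun i => by ring
  rw [Finset.sum_congr rfl fun i _ => h1 i]
  rw [Finset.sum_add_distrib, Finset.sum_sub_distrib, Finset.sum_sub_distrib,
    Finset.sum_const, ← Finset.mul_sum, ← Finset.mul_sum, Finset.card_univ,
    Fintype.card_fin]
  field_simp
  have hnn : (n:ℝ)^2 * ((n:ℝ)⁻¹)^2 = 1 := by rw [← mul_pow, mul_inv_cancel₀ hn', one_pow]
  linear_combination ((∑ j, x j) * (∑ j, y j)) * hnn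

set_option maxHeartbeats 1000000 in
/-- The spectral cone `K_Λ^μ` is self-dual with respect to the
standard inner product on ℝⁿ if and only if `μ = n/2`. -/
theorem stmt4 (n : ℕ) (hn : 2 ≤ n) (μ : ℝ) (hμ0 : 0 < μ) (hμn : μ < n) :
    ({y : Fin n → ℝ |
        ∀ x ∈ {x : Fin n → ℝ |
          (∑ i, x i) ^ 2 - μ * ∑ i, (x i) ^ 2 ≥ 0 ∧ ∑ i, x i ≥ 0},
          0 ≤ ∑ i, y i * x i} =
      {x : Fin n → ℝ |
        (∑ i, x i) ^ 2 - μ * ∑ i, (x i) ^ 2 ≥ 0 ∧ ∑ i, x i ≥ 0}) ↔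
      μ = (n : ℝ) / 2 := by
  have hn0 : 0 < n := by omega
  have hnR : (0 : ℝ) < n := by exact_mod_cast hn0
  have hnR' : (n : ℝ) ≠ 0 := ne_of_gt hnR
  haveI : NeZero n := ⟨by omega⟩
  have h01 : (0 : Fin n) ≠ (1 : Fin n) := by
    have h : (0 : Fin n).val ≠ (1 : Fin n).val := by
      simp [Fin.val_zero, Fin.val_one', Nat.mod_eq_of_lt hn]
    exact fun h' => h (congrArg Fin.val h')
  -- sum of a function supported on {0, 1}
  have key : ∀ g : Fin n → ℝ, (∀ i, i ≠ 0 → i ≠ 1 → g i = 0) →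
      ∑ i, g i = g 0 + g 1 := by
    intro g hg
    rw [← Finset.sum_subset (Finset.subset_univ ({0, 1} : Finset (Fin n)))
      (by intro i _ hi; simp only [Finset.mem_insert, Finset.mem_singleton, not_or] at hi
          exact hg i hi.1 hi.2)]
    exact Finset.sum_pair h01
  set z : Fin n → ℝ := fun i => if i = 0 then 1 else if i = 1 then -1 else 0 with hz
  have hz0 : z 0 = 1 := by simp [hz]
  have hz1 : z 1 = -1 := by simp [hz, h01.symm]
  have hzsum : ∑ i, z i = 0 := by
    rw [key z (fun i hi0 hi1 => by simp [hz, hi0, hi1]), hz0, hz1]; ring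
  have hzsq : ∑ i, (z i) ^ 2 = 2 := by
    have : ∀ i : Fin n, (z i) ^ 2 = (fun i => if i = 0 then (1:ℝ) else if i = 1 then 1 else 0) i := by
      intro i
      by_cases hi0 : i = 0
      · simp [hz, hi0]
      · by_cases hi1 : i = 1 <;> simp [hz, hi0, hi1]
    rw [Finset.sum_congr rfl fun i _ => this i,
      key _ (fun i hi0 hi1 => by simp [hi0, hi1])]
    simp [h01.symm]
    norm_num
  constructor
  · -- self-dual → μ = n/2
    intro hSD
    by_contra hne
    rcases lt_or_gt_of_ne hne with hlt | hgt
    · -- μ < n/2 : x = 1 + b z and y = 1 - b z lie in K but ⟨y, x⟩ < 0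
      set b : ℝ := Real.sqrt (n * (n - μ) / (2 * μ)) with hb
      have hb2 : b ^ 2 = n * (n - μ) / (2 * μ) := by
        rw [hb, Real.sq_sqrt]
        have : (0:ℝ) < n - μ := by linarith
        positivity
      set x : Fin n → ℝ := fun i => 1 + b * z i with hx
      set y : Fin n → ℝ := fun i => 1 - b * z i with hy
      have hxsum : ∑ i, x i = n := by
        simp only [hx]
        rw [Finset.sum_add_distrib, Finset.sum_const, ← Finset.mul_sum,
          Finset.card_univ, Fintype.card_fin, hzsum]
        simp
      have hysum : ∑ i, y i = n := by
        simp only [hy]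
        rw [Finset.sum_sub_distrib, Finset.sum_const, ← Finset.mul_sum,
          Finset.card_univ, Fintype.card_fin, hzsum]
        simp
      have hxsq : ∑ i, (x i) ^ 2 = n + 2 * b ^ 2 := by
        have : ∀ i : Fin n, (x i) ^ 2 = 1 + 2 * b * z i + b ^ 2 * (z i) ^ 2 :=
          fun i => by simp only [hx]; ring
        rw [Finset.sum_congr rfl fun i _ => this i, Finset.sum_add_distrib,
          Finset.sum_add_distrib, Finset.sum_const, ← Finset.mul_sum,
          ← Finset.mul_sum, Finset.card_univ, Fintype.card_fin, hzsum, hzsq]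
        simp; ring
      have hysq : ∑ i, (y i) ^ 2 = n + 2 * b ^ 2 := by
        have : ∀ i : Fin n, (y i) ^ 2 = 1 - 2 * b * z i + b ^ 2 * (z i) ^ 2 :=
          fun i => by simp only [hy]; ring
        rw [Finset.sum_congr rfl fun i _ => this i, Finset.sum_add_distrib,
          Finset.sum_sub_distrib, Finset.sum_const, ← Finset.mul_sum,
          ← Finset.mul_sum, Finset.card_univ, Fintype.card_fin, hzsum, hzsq]
        simp; ring
      have hμb : μ * (2 * b ^ 2) = n * (n - μ) := by
        rw [hb2]; field_simp
      have hxK : x ∈ {x : Fin n → ℝ |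
          (∑ i, x i) ^ 2 - μ * ∑ i, (x i) ^ 2 ≥ 0 ∧ ∑ i, x i ≥ 0} := by
        refine ⟨?_, by rw [hxsum]; positivity⟩
        rw [hxsum, hxsq]
        nlinarith [hμb]
      have hyK : y ∈ {x : Fin n → ℝ |
          (∑ i, x i) ^ 2 - μ * ∑ i, (x i) ^ 2 ≥ 0 ∧ ∑ i, x i ≥ 0} := by
        refine ⟨?_, by rw [hysum]; positivity⟩
        rw [hysum, hysq]
        nlinarith [hμb]
      have hyD := hSD ▸ hyK
      have hpos := hyD x hxK
      have hxy : ∑ i, y i * x i = n - 2 * b ^ 2 := by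
        have : ∀ i : Fin n, y i * x i = 1 - b ^ 2 * (z i) ^ 2 :=
          fun i => by simp only [hx, hy]; ring
        rw [Finset.sum_congr rfl fun i _ => this i, Finset.sum_sub_distrib,
          Finset.sum_const, ← Finset.mul_sum, Finset.card_univ,
          Fintype.card_fin, hzsq]
        simp; ring
      rw [hxy] at hpos
      -- n - 2b² = n - n(n-μ)/μ = n(2μ-n)/μ < 0
      nlinarith [hμb]
    · -- μ > n/2 : y = 1 + c z with c² = n/2 is in the dual but not in K
      set c : ℝ := Real.sqrt (n / 2) with hc
      have hc2 : c ^ 2 = n / 2 := by rw [hc, Real.sq_sqrt]; positivity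
      set y : Fin n → ℝ := fun i => 1 + c * z i with hy
      have hysum : ∑ i, y i = n := by
        simp only [hy]
        rw [Finset.sum_add_distrib, Finset.sum_const, ← Finset.mul_sum,
          Finset.card_univ, Fintype.card_fin, hzsum]
        simp
      have hysq : ∑ i, (y i) ^ 2 = 2 * n := by
        have : ∀ i : Fin n, (y i) ^ 2 = 1 + 2 * c * z i + c ^ 2 * (z i) ^ 2 :=
          fun i => by simp only [hy]; ring
        rw [Finset.sum_congr rfl fun i _ => this i, Finset.sum_add_distrib,
          Finset.sum_add_distrib, Finset.sum_const, ← Finset.mul_sum,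
          ← Finset.mul_sum, Finset.card_univ, Fintype.card_fin, hzsum, hzsq,
          hc2]
        simp; ring
      have hyD : y ∈ {y : Fin n → ℝ |
          ∀ x ∈ {x : Fin n → ℝ |
            (∑ i, x i) ^ 2 - μ * ∑ i, (x i) ^ 2 ≥ 0 ∧ ∑ i, x i ≥ 0},
            0 ≤ ∑ i, y i * x i} := by
        intro x hx
        obtain ⟨hx1, hx2⟩ := hx
        have hxy : ∑ i, y i * x i = (∑ i, x i) + c * (x 0 - x 1) := by
          have h1 : ∀ i : Fin n, y i * x i = x i + c * (z i * x i) :=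
            fun i => by simp only [hy]; ring
          rw [Finset.sum_congr rfl fun i _ => h1 i, Finset.sum_add_distrib,
            ← Finset.mul_sum,
            key (fun i => z i * x i) (fun i hi0 hi1 => by simp [hz, hi0, hi1]),
            hz0, hz1]
          ring
        rw [hxy]
        set S := ∑ i, x i with hS
        clear_value S
        -- centered second moment bound
        have hA : ∑ i, (x i - S / n) ^ 2 = ∑ i, (x i) ^ 2 - S ^ 2 / n := by
          rw [hS]; exact sumsq_center hn0 x
        have hAle : ∑ i, (x i - S / n) ^ 2 ≤ S ^ 2 * (n - μ) / (n * μ) := by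
          rw [hA]
          have hsx : ∑ i, (x i) ^ 2 ≤ S ^ 2 / μ := by
            rw [le_div_iff₀ hμ0]; nlinarith [hx1]
          have heq : S ^ 2 / μ - S ^ 2 / ↑n = S ^ 2 * (↑n - μ) / (↑n * μ) := by
            field_simp
          linarith
        -- (x 0 - x 1)² ≤ 2 ∑ x̂²
        have hd : (x 0 - x 1) ^ 2 ≤ 2 * ∑ i, (x i - S / n) ^ 2 := by
          have h0 : (x 0 - S / n) ^ 2 + (x 1 - S / n) ^ 2
              ≤ ∑ i, (x i - S / n) ^ 2 := by
            have := Finset.sum_pair (f := fun i => (x i - S / n) ^ 2) h01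
            rw [← this]
            exact Finset.sum_le_sum_of_subset_of_nonneg (Finset.subset_univ _)
              (fun i _ _ => sq_nonneg _)
          nlinarith [sq_nonneg ((x 0 - S / n) + (x 1 - S / n))]
        have hcd : (c * (x 0 - x 1)) ^ 2 ≤ S ^ 2 := by
          have h1 : (c * (x 0 - x 1)) ^ 2 = (n / 2) * (x 0 - x 1) ^ 2 := by
            rw [mul_pow, hc2]
          have h2 : (n:ℝ) / 2 * (2 * (S ^ 2 * (n - μ) / (n * μ))) ≤ S ^ 2 := by
            have hμn' : (0:ℝ) < μ := hμ0
            have hineq : (n:ℝ) - μ ≤ μ := by linarith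
            have : (n:ℝ) / 2 * (2 * (S ^ 2 * (n - μ) / (n * μ)))
                = S ^ 2 * ((n - μ) / μ) := by field_simp
            rw [this]
            have h3 : ((n:ℝ) - μ) / μ ≤ 1 := by
              rw [div_le_one hμ0]; linarith
            nlinarith [sq_nonneg S]
          calc (c * (x 0 - x 1)) ^ 2 = (n / 2) * (x 0 - x 1) ^ 2 := h1
            _ ≤ (n / 2) * (2 * ∑ i, (x i - S / n) ^ 2) := by
                have : (0:ℝ) ≤ n / 2 := by positivity
                nlinarith [hd]
            _ ≤ (n / 2) * (2 * (S ^ 2 * (n - μ) / (n * μ))) := by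
                have : (0:ℝ) ≤ n / 2 := by positivity
                nlinarith [hAle]
            _ ≤ S ^ 2 := h2
        nlinarith [hcd, hx2, sq_nonneg (S + c * (x 0 - x 1))]
      have hyK := hSD ▸ hyD
      obtain ⟨hy1, _⟩ := hyK
      rw [hysum, hysq] at hy1
      nlinarith [hy1]
  · -- μ = n/2 → self-dual
    intro hμ
    subst hμ
    ext y
    simp only [Set.mem_setOf_eq]
    constructor
    · -- dual ⊆ K
      intro hy
      set T := ∑ i, y i with hT
      -- T ≥ 0 using the all-ones vector
      have hones : ((fun _ => 1 : Fin n → ℝ) ∈ {x : Fin n → ℝ |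
          (∑ i, x i) ^ 2 - (n:ℝ)/2 * ∑ i, (x i) ^ 2 ≥ 0 ∧ ∑ i, x i ≥ 0}) := by
        constructor <;> simp [Finset.sum_const, Finset.card_univ] <;> nlinarith [hnR]
      have hT0 : 0 ≤ T := by
        have := hy _ hones
        simpa [hT] using this
      set B := ∑ i, (y i - T / n) ^ 2 with hB
      have hB0 : 0 ≤ B := Finset.sum_nonneg fun i _ => sq_nonneg _
      have hBval : B = ∑ i, (y i) ^ 2 - T ^ 2 / n := sumsq_center hn0 y
      set r : ℝ := Real.sqrt (B / n) with hr
      have hr0 : 0 ≤ r := Real.sqrt_nonneg _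
      have hr2 : r ^ 2 = B / n := by rw [hr, Real.sq_sqrt]; positivity
      set x : Fin n → ℝ := fun i => r - (y i - T / n) with hx
      have hyhat : ∑ i, (y i - T / n) = 0 := by
        rw [Finset.sum_sub_distrib, Finset.sum_const, Finset.card_univ,
          Fintype.card_fin]
        have hnT : (n:ℝ) * (T / n) = T := by field_simp
        rw [nsmul_eq_mul, hnT]; simp [hT]
      have hxsum : ∑ i, x i = n * r := by
        simp only [hx]
        rw [Finset.sum_sub_distrib, Finset.sum_const, Finset.card_univ,
          Fintype.card_fin, hyhat]
        simp
      have hxsq : ∑ i, (x i) ^ 2 = 2 * B := by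
        have h1 : ∀ i : Fin n, (x i) ^ 2
            = r ^ 2 - 2 * r * (y i - T / n) + (y i - T / n) ^ 2 :=
          fun i => by simp only [hx]; ring
        rw [Finset.sum_congr rfl fun i _ => h1 i, Finset.sum_add_distrib,
          Finset.sum_sub_distrib, Finset.sum_const, ← Finset.mul_sum,
          Finset.card_univ, Fintype.card_fin, hyhat, ← hB, hr2]
        field_simp
        linear_combination B * (mul_inv_cancel₀ hnR')
      have hxK : x ∈ {x : Fin n → ℝ |
          (∑ i, x i) ^ 2 - (n:ℝ)/2 * ∑ i, (x i) ^ 2 ≥ 0 ∧ ∑ i, x i ≥ 0} := by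
        constructor
        · rw [hxsum, hxsq]
          have : ((n:ℝ) * r) ^ 2 = n * B := by
            rw [mul_pow, hr2]; field_simp
          rw [this]; nlinarith
        · rw [hxsum]; positivity
      have hdual := hy x hxK
      have hyx : ∑ i, y i * x i = T * r - B := by
        have h1 : ∀ i : Fin n, y i * x i
            = r * y i - ((y i - T / n) + T / n) * (y i - T / n) :=
          fun i => by simp only [hx]; ring
        have h2 : ∀ i : Fin n, ((y i - T / n) + T / n) * (y i - T / n)
            = (y i - T / n) ^ 2 + (T / n) * (y i - T / n) := fun i => by ring
        rw [Finset.sum_congr rfl fun i _ => h1 i, Finset.sum_sub_distrib,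
          Finset.sum_congr rfl fun i _ => h2 i, Finset.sum_add_distrib,
          ← Finset.mul_sum, ← Finset.mul_sum, hyhat, ← hB]
        simp [hT]
        ring
      rw [hyx] at hdual
      -- T r ≥ B with r² = B/n gives T² ≥ n B
      have hTB : T ^ 2 ≥ n * B := by
        rcases eq_or_lt_of_le hB0 with hB0' | hBpos
        · nlinarith [sq_nonneg T]
        · have h1 : B ≤ T * r := by linarith
          have h2 : (T * r) ^ 2 = T ^ 2 * (B / n) := by rw [mul_pow, hr2]
          have h3 : B ^ 2 ≤ T ^ 2 * (B / n) := by nlinarith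
          have h4 : B ^ 2 * n ≤ T ^ 2 * B := by
            have := mul_le_mul_of_nonneg_right h3 (le_of_lt hnR)
            calc B ^ 2 * n ≤ T ^ 2 * (B / n) * n := this
              _ = T ^ 2 * B := by field_simp
          nlinarith [hBpos]
      refine ⟨?_, hT0⟩
      have hsum_sq : ∑ i, (y i) ^ 2 = B + T ^ 2 / n := by rw [hBval]; ring
      rw [hsum_sq]
      have : T ^ 2 - (n:ℝ)/2 * (B + T ^ 2 / n) = (T ^ 2 - n * B) / 2 := by
        field_simp; ring
      rw [this]
      linarith
    · -- K ⊆ dual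
      intro hy x hx
      obtain ⟨hx1, hx2⟩ := hx
      obtain ⟨hy1, hy2⟩ := hy
      set S := ∑ i, x i with hS
      set T := ∑ i, y i with hT
      have hA : ∑ i, (x i - S / n) ^ 2 = ∑ i, (x i) ^ 2 - S ^ 2 / n :=
        sumsq_center hn0 x
      have hB : ∑ i, (y i - T / n) ^ 2 = ∑ i, (y i) ^ 2 - T ^ 2 / n :=
        sumsq_center hn0 y
      have hAle : ∑ i, (x i - S / n) ^ 2 ≤ S ^ 2 / n := by
        rw [hA]
        have : (n:ℝ)/2 * ∑ i, (x i) ^ 2 ≤ S ^ 2 := by linarith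
        have h2 : ∑ i, (x i) ^ 2 ≤ 2 * S ^ 2 / n := by
          rw [le_div_iff₀ hnR]
          nlinarith
        have : 2 * S ^ 2 / n - S ^ 2 / n = S ^ 2 / n := by field_simp; ring
        linarith
      have hBle : ∑ i, (y i - T / n) ^ 2 ≤ T ^ 2 / n := by
        rw [hB]
        have : (n:ℝ)/2 * ∑ i, (y i) ^ 2 ≤ T ^ 2 := by linarith
        have h2 : ∑ i, (y i) ^ 2 ≤ 2 * T ^ 2 / n := by
          rw [le_div_iff₀ hnR]
          nlinarith
        have : 2 * T ^ 2 / n - T ^ 2 / n = T ^ 2 / n := by field_simp; ring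
        linarith
      have hCS := Finset.sum_mul_sq_le_sq_mul_sq Finset.univ
        (fun i => y i - T / n) (fun i => x i - S / n)
      have hcenter : ∑ i, (y i - T / n) * (x i - S / n)
          = ∑ i, y i * x i - T * S / n := sum_center hn0 y x
      have hAB : (∑ i, (y i - T / n)^2) * (∑ i, (x i - S / n)^2)
          ≤ (T ^ 2 / n) * (S ^ 2 / n) := by
        have h1 : 0 ≤ ∑ i, (x i - S / n) ^ 2 :=
          Finset.sum_nonneg fun i _ => sq_nonneg _
        have h2 : 0 ≤ ∑ i, (y i - T / n) ^ 2 :=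
          Finset.sum_nonneg fun i _ => sq_nonneg _
        have h3 : (0:ℝ) ≤ T ^ 2 / n := by positivity
        nlinarith
      have hsq : (∑ i, (y i - T / n) * (x i - S / n)) ^ 2 ≤ (T * S / n) ^ 2 := by
        have : (T ^ 2 / n) * (S ^ 2 / n) = (T * S / n) ^ 2 := by field_simp
        calc (∑ i, (y i - T / n) * (x i - S / n)) ^ 2
            ≤ (∑ i, (y i - T / n)^2) * (∑ i, (x i - S / n)^2) := hCS
          _ ≤ (T ^ 2 / n) * (S ^ 2 / n) := hAB
          _ = (T * S / n) ^ 2 := this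
      have hTS : 0 ≤ T * S / n := by positivity
      have hlow : -(T * S / n) ≤ ∑ i, (y i - T / n) * (x i - S / n) := by
        nlinarith [hsq, hTS, sq_nonneg (∑ i, (y i - T / n) * (x i - S / n) + T * S / n)]
      rw [hcenter] at hlow
      linarith
end

section
/- Let F, G : D → ℝ be an antimonotone pair on D ⊆ ℝ, i.e. (F(a)-F(b))(G(a)-G(b)) ≤ 0 for all a,b ∈ D. Let Σ be a Hermitian matrix with spectrum contained in D and X a Hermitian matrix. Then tr(F(Σ) X G(Σ) X) ≥ tr(F(Σ) G(Σ) X²). -/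
open Matrix Classical

/-- Functional calculus: apply `f : ℝ → ℝ` to a symmetric (Hermitian) real
matrix via its spectral decomposition (junk value `0` otherwise). -/
noncomputable def matFun {n : ℕ} (f : ℝ → ℝ) (A : Matrix (Fin n) (Fin n) ℝ) :
    Matrix (Fin n) (Fin n) ℝ :=
  if h : A.IsHermitian then
    (h.eigenvectorUnitary : Matrix (Fin n) (Fin n) ℝ) *
      Matrix.diagonal (f ∘ h.eigenvalues) *
      (star (h.eigenvectorUnitary : Matrix (Fin n) (Fin n) ℝ))
  else 0

lemma sum_ineq {n : ℕ} (d e : Fin n → ℝ) (c : Fin n → Fin n → ℝ)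
    (hc : ∀ i j, c j i = c i j) (hc0 : ∀ i j, 0 ≤ c i j)
    (h : ∀ i j, (d i - d j) * (e i - e j) ≤ 0) :
    ∑ i, ∑ j, d i * e i * c i j ≤ ∑ i, ∑ j, d i * e j * c i j := by
  set T : ℝ := ∑ i, ∑ j, (d i * e j - d i * e i) * c i j with hTdef
  have hswap : T = ∑ i, ∑ j, (d j * e i - d j * e j) * c i j := by
    rw [hTdef, Finset.sum_comm]
    refine Finset.sum_congr rfl fun i _ => Finset.sum_congr rfl fun j _ => ?_
    rw [hc i j]
  have hpos : 0 ≤ T + T := by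
    nth_rewrite 2 [hswap]
    rw [← Finset.sum_add_distrib]
    refine Finset.sum_nonneg fun i _ => ?_
    rw [← Finset.sum_add_distrib]
    refine Finset.sum_nonneg fun j _ => ?_
    nlinarith [mul_nonneg (neg_nonneg.mpr (h i j)) (hc0 i j)]
  have hT : T = (∑ i, ∑ j, d i * e j * c i j) - ∑ i, ∑ j, d i * e i * c i j := by
    rw [hTdef, ← Finset.sum_sub_distrib]
    refine Finset.sum_congr rfl fun i _ => ?_
    rw [← Finset.sum_sub_distrib]
    exact Finset.sum_congr rfl fun j _ => by ring
  linarith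

/-- If (F,G) is an antimonotone pair on D, S is Hermitian with
spectrum in D, and X is Hermitian, then tr(F(S) X G(S) X) ≥ tr(F(S) G(S) X²). -/
theorem stmt11 (n : ℕ) (D : Set ℝ) (F G : ℝ → ℝ)
    (hanti : ∀ a ∈ D, ∀ b ∈ D, (F a - F b) * (G a - G b) ≤ 0)
    (S X : Matrix (Fin n) (Fin n) ℝ)
    (hS : S.IsHermitian) (hX : X.IsHermitian)
    (hspec : ∀ i, hS.eigenvalues i ∈ D) :
    (matFun F S * X * matFun G S * X).trace ≥
      (matFun F S * matFun G S * (X * X)).trace := by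
  set U : Matrix (Fin n) (Fin n) ℝ := (hS.eigenvectorUnitary : Matrix (Fin n) (Fin n) ℝ) with hUdef
  have hUU : star U * U = 1 := hS.eigenvectorUnitary.2.1
  have hUU' : U * star U = 1 := hS.eigenvectorUnitary.2.2
  have hc1 : ∀ Z : Matrix (Fin n) (Fin n) ℝ, star U * (U * Z) = Z := fun Z => by
    rw [← Matrix.mul_assoc, hUU, Matrix.one_mul]
  have hc2 : ∀ Z : Matrix (Fin n) (Fin n) ℝ, U * (star U * Z) = Z := fun Z => by
    rw [← Matrix.mul_assoc, hUU', Matrix.one_mul]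
  set Y : Matrix (Fin n) (Fin n) ℝ := star U * X * U with hYdef
  have hYh : Yᴴ = Y := by
    rw [hYdef, Matrix.conjTranspose_mul, Matrix.conjTranspose_mul, hX.eq]
    simp [Matrix.star_eq_conjTranspose, Matrix.mul_assoc]
  have hYsym : ∀ i j, Y j i = Y i j := fun i j => by
    conv_lhs => rw [← hYh]
    simp [Matrix.conjTranspose_apply]
  set d : Fin n → ℝ := fun i => F (hS.eigenvalues i) with hddef
  set e : Fin n → ℝ := fun i => G (hS.eigenvalues i) with hedef
  have hF : matFun F S = U * Matrix.diagonal d * star U := by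
    rw [matFun, dif_pos hS]; rfl
  have hG : matFun G S = U * Matrix.diagonal e * star U := by
    rw [matFun, dif_pos hS]; rfl
  have e1 : matFun F S * X * matFun G S * X
      = U * (Matrix.diagonal d * Y * Matrix.diagonal e * Y) * star U := by
    rw [hF, hG, hYdef]
    simp only [Matrix.mul_assoc, hc1, hc2, hUU', Matrix.mul_one]
  have e2 : matFun F S * matFun G S * (X * X)
      = U * (Matrix.diagonal d * Matrix.diagonal e * (Y * Y)) * star U := by
    rw [hF, hG, hYdef]
    simp only [Matrix.mul_assoc, hc1, hc2, hUU', Matrix.mul_one]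
  have tr_conj : ∀ A : Matrix (Fin n) (Fin n) ℝ, (U * A * star U).trace = A.trace := by
    intro A
    rw [Matrix.trace_mul_cycle, hUU, Matrix.one_mul]
  rw [e1, e2, tr_conj, tr_conj]
  have hA : Matrix.diagonal d * Y * Matrix.diagonal e
      = Matrix.of fun i j => d i * Y i j * e j := by
    ext i j
    simp [Matrix.diagonal_mul, Matrix.mul_diagonal]
  have lhs_eq : (Matrix.diagonal d * Y * Matrix.diagonal e * Y).trace
      = ∑ i, ∑ j, d i * e j * (Y i j * Y i j) := by
    rw [hA]
    simp only [Matrix.trace, Matrix.diag_apply, Matrix.mul_apply, Matrix.of_apply]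
    refine Finset.sum_congr rfl fun i _ => Finset.sum_congr rfl fun j _ => ?_
    rw [hYsym i j]; ring
  have rhs_eq : (Matrix.diagonal d * Matrix.diagonal e * (Y * Y)).trace
      = ∑ i, ∑ j, d i * e i * (Y i j * Y i j) := by
    rw [Matrix.diagonal_mul_diagonal]
    have hDtr : ∀ (f : Fin n → ℝ) (M : Matrix (Fin n) (Fin n) ℝ),
        (Matrix.diagonal f * M).trace = ∑ i, f i * M i i := fun f M => by
      simp [Matrix.trace, Matrix.diag_apply, Matrix.diagonal_mul]
    rw [hDtr]
    simp only [Matrix.mul_apply, Finset.mul_sum]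
    refine Finset.sum_congr rfl fun i _ => Finset.sum_congr rfl fun j _ => ?_
    rw [hYsym i j]
  rw [lhs_eq, rhs_eq]
  exact sum_ineq d e (fun i j => Y i j * Y i j)
    (fun i j => by simp only [hYsym i j])
    (fun i j => mul_self_nonneg _)
    (fun i j => hanti _ (hspec i) _ (hspec j))
end

section
/- Let Σ ∈ S⁺ₙ, X a symmetric (Hermitian) matrix, and k ≥ 0 an integer. Then tr(Σ^{-2-k} X Σ^{k} X) ≥ tr(Σ^{-1-k} X Σ^{-1+k} X). -/
/-!
Diagonalise `S = U diag(λ) Uᵀ` and put `Y = Uᵀ X U`, a symmetric matrix. For functions `f, g`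
applied to `S` one has `tr(f(S) X g(S) X) = ∑ᵢⱼ f(λᵢ) g(λⱼ) Yᵢⱼ²`, so, symmetrising in `i, j`,
a trace inequality between two such expressions follows from the inequality between the
symmetrised scalar kernels on the spectrum. For the kernels at hand,
`a⁻²⁻ᵏbᵏ + b⁻²⁻ᵏaᵏ - a⁻¹⁻ᵏbᵏ⁻¹ - b⁻¹⁻ᵏaᵏ⁻¹ = (a - b)(a²ᵏ⁺¹ - b²ᵏ⁺¹) / (ab)ᵏ⁺²`,
which is nonnegative because `x ↦ x²ᵏ⁺¹` is monotone.
-/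

open Finset

theorem zpow_mul_zpow_add_zpow_mul_zpow_le {a b : ℝ} (ha : 0 < a) (hb : 0 < b) (k : ℕ) :
    a ^ (-1 - (k : ℤ)) * b ^ (-1 + (k : ℤ)) + b ^ (-1 - (k : ℤ)) * a ^ (-1 + (k : ℤ)) ≤
      a ^ (-2 - (k : ℤ)) * b ^ (k : ℤ) + b ^ (-2 - (k : ℤ)) * a ^ (k : ℤ) := by
  have hmono : 0 ≤ (a - b) * (a ^ (2 * k + 1) - b ^ (2 * k + 1)) := by
    rcases le_total a b with hab | hab
    · exact mul_nonneg_of_nonpos_of_nonpos (sub_nonpos.2 hab)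
        (sub_nonpos.2 (pow_le_pow_left₀ ha.le hab _))
    · exact mul_nonneg (sub_nonneg.2 hab) (sub_nonneg.2 (pow_le_pow_left₀ hb.le hab _))
  have hneg : ∀ m : ℕ, ∀ x : ℝ, x ^ (-(m : ℤ) - (k : ℤ)) = (x ^ (m + k))⁻¹ := fun m x => by
    rw [← zpow_natCast, ← zpow_neg]; push_cast; ring_nf
  have hpred : ∀ x : ℝ, 0 < x → x ^ (-1 + (k : ℤ)) = x ^ k / x := fun x hx => by
    rw [zpow_add₀ hx.ne', zpow_neg_one, zpow_natCast, inv_mul_eq_div]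
  have hneg₁ := hneg 1
  have hneg₂ := hneg 2
  push_cast at hneg₁ hneg₂
  rw [hneg₁, hneg₁, hneg₂, hneg₂, hpred a ha, hpred b hb, zpow_natCast, zpow_natCast,
    ← sub_nonneg]
  refine (div_nonneg hmono (by positivity : (0 : ℝ) ≤ (a * b) ^ (k + 2))).trans_eq ?_
  field_simp
  ring

theorem Finset.sum_sum_mul_nonneg_of_add_swap_nonneg {ι : Type*} (s : Finset ι)
    (K w : ι → ι → ℝ) (hK : ∀ i ∈ s, ∀ j ∈ s, 0 ≤ K i j + K j i)
    (hw : ∀ i ∈ s, ∀ j ∈ s, 0 ≤ w i j) (hw_symm : ∀ i j, w j i = w i j) :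
    0 ≤ ∑ i ∈ s, ∑ j ∈ s, K i j * w i j := by
  have hsymm : 2 * ∑ i ∈ s, ∑ j ∈ s, K i j * w i j
      = ∑ i ∈ s, ∑ j ∈ s, (K i j + K j i) * w i j := by
    simp only [add_mul, sum_add_distrib, two_mul]
    rw [sum_comm (f := fun i j => K j i * w i j)]
    simp only [hw_symm]
  have : 0 ≤ ∑ i ∈ s, ∑ j ∈ s, (K i j + K j i) * w i j :=
    sum_nonneg fun i hi => sum_nonneg fun j hj => mul_nonneg (hK i hi j hj) (hw i hi j hj)
  linarith

namespace Matrix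

variable {n : Type*} [Fintype n]

theorem IsSymm.transpose_mul_mul {R : Type*} [CommSemiring R] {X : Matrix n n R}
    (hX : X.IsSymm) (B : Matrix n n R) : (Bᵀ * X * B).IsSymm := by
  rw [IsSymm, transpose_mul, transpose_mul, transpose_transpose, hX.eq, Matrix.mul_assoc]

theorem trace_mul_mul_mul_mul_mul {R : Type*} [CommSemiring R] (U V D E X : Matrix n n R) :
    (U * D * V * X * (U * E * V) * X).trace = (D * (V * X * U) * E * (V * X * U)).trace := by
  rw [Matrix.mul_assoc U, Matrix.mul_assoc U, Matrix.mul_assoc U, Matrix.mul_assoc U,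
    Matrix.mul_assoc U, trace_mul_comm U]
  simp only [Matrix.mul_assoc]

variable [DecidableEq n]

theorem trace_diagonal_mul_diagonal_mul {R : Type*} [CommSemiring R] (d e : n → R)
    (Y : Matrix n n R) :
    (diagonal d * Y * diagonal e * Y).trace = ∑ i, ∑ j, d i * e j * (Y i j * Y j i) := by
  simp only [trace, diag, mul_apply (M := diagonal d * Y * diagonal e), mul_diagonal,
    diagonal_mul]
  exact sum_congr rfl fun i _ => sum_congr rfl fun j _ => by ring

theorem PosDef.zpow_eq_cfc {S : Matrix n n ℝ} (hS : S.PosDef) (z : ℤ) :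
    S ^ z = cfc (fun x : ℝ => x ^ z) S := by
  obtain ⟨u, rfl⟩ := hS.isUnit
  rw [← coe_units_zpow, cfc_zpow u z hS.isHermitian.isSelfAdjoint]

theorem PosDef.pos_of_mem_spectrum_real {S : Matrix n n ℝ} (hS : S.PosDef) {x : ℝ}
    (hx : x ∈ spectrum ℝ S) : 0 < x := by
  obtain ⟨i, rfl⟩ := hS.isHermitian.spectrum_real_eq_range_eigenvalues ▸ hx
  exact hS.eigenvalues_pos i

theorem IsHermitian.trace_cfc_mul_cfc_mul {A : Matrix n n ℝ} (hA : A.IsHermitian)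
    (f g : ℝ → ℝ) (X : Matrix n n ℝ) :
    (cfc f A * X * cfc g A * X).trace =
      ∑ i, ∑ j, f (hA.eigenvalues i) * g (hA.eigenvalues j) *
        ((star (hA.eigenvectorUnitary : Matrix n n ℝ) * X * hA.eigenvectorUnitary) i j *
          (star (hA.eigenvectorUnitary : Matrix n n ℝ) * X * hA.eigenvectorUnitary) j i) := by
  rw [hA.cfc_eq, hA.cfc_eq, IsHermitian.cfc, IsHermitian.cfc, Unitary.conjStarAlgAut_apply,
    Unitary.conjStarAlgAut_apply, trace_mul_mul_mul_mul_mul, trace_diagonal_mul_diagonal_mul]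
  rfl

theorem IsHermitian.trace_cfc_mul_cfc_mul_le {A X : Matrix n n ℝ} (hA : A.IsHermitian)
    (hX : X.IsSymm) {f₁ g₁ f₂ g₂ : ℝ → ℝ}
    (h : ∀ a ∈ spectrum ℝ A, ∀ b ∈ spectrum ℝ A,
      f₁ a * g₁ b + f₁ b * g₁ a ≤ f₂ a * g₂ b + f₂ b * g₂ a) :
    (cfc f₁ A * X * cfc g₁ A * X).trace ≤ (cfc f₂ A * X * cfc g₂ A * X).trace := by
  set U : Matrix n n ℝ := ↑hA.eigenvectorUnitary
  have hY : (star U * X * U).IsSymm := hX.transpose_mul_mul U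
  rw [hA.trace_cfc_mul_cfc_mul, hA.trace_cfc_mul_cfc_mul, ← sub_nonneg, ← sum_sub_distrib]
  simp_rw [← sum_sub_distrib, ← sub_mul]
  refine sum_sum_mul_nonneg_of_add_swap_nonneg _ _ _ (fun i _ j _ => ?_)
    (fun i _ j _ => hY.apply i j ▸ mul_self_nonneg _) (fun i j => mul_comm _ _)
  linarith [h _ (hA.eigenvalues_mem_spectrum_real i) _ (hA.eigenvalues_mem_spectrum_real j)]

end Matrix

/-- For S positive definite, X symmetric, and an integer k ≥ 0,
tr(S^{-2-k} X S^{k} X) ≥ tr(S^{-1-k} X S^{-1+k} X). -/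
theorem stmt12 (n : ℕ) (S X : Matrix (Fin n) (Fin n) ℝ)
    (hS : S.PosDef) (hX : X.IsSymm) (k : ℕ) :
    (S ^ (-2 - (k : ℤ)) * X * S ^ (k : ℤ) * X).trace ≥
      (S ^ (-1 - (k : ℤ)) * X * S ^ (-1 + (k : ℤ)) * X).trace := by
  simp only [hS.zpow_eq_cfc]
  refine hS.isHermitian.trace_cfc_mul_cfc_mul_le hX fun a ha b hb => ?_
  exact zpow_mul_zpow_add_zpow_mul_zpow_le (hS.pos_of_mem_spectrum_real ha)
    (hS.pos_of_mem_spectrum_real hb) k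
end

section
/- Let p ∈ ℕ, Σ ∈ S⁺ₙ, and let D : Sym(n) → Sym(n) be the (unique) solution map of the generalized Sylvester equation ∑_{j=0}^{p-1} Σ^{(p-1-j)/p} (DX) Σ^{j/p} = X (i.e., D is the differential of Σ ↦ Σ^{1/p}). Then for every symmetric X: p·tr(Σ^{-1/p}·DX) = tr(Σ⁻¹X). -/
/-! Every `matRpow S r` is a function of `S` in the continuous functional calculus, so these
powers commute and multiply by adding exponents. Multiplying the Sylvester equation by
`S⁻¹ = S ^ (-1)` and taking traces, cyclicity turns each of its `p` terms into
`tr (S ^ (-1/p) * D X)`, because the exponents `(p-1-j)/p`, `j/p` and `-1` add up to `-1/p`. -/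

open Matrix Classical

/-- Real power of a symmetric (Hermitian) real matrix via its spectral
decomposition (junk value `0` otherwise). -/
noncomputable def matRpow {n : ℕ} (A : Matrix (Fin n) (Fin n) ℝ) (r : ℝ) :
    Matrix (Fin n) (Fin n) ℝ :=
  if h : A.IsHermitian then
    (h.eigenvectorUnitary : Matrix (Fin n) (Fin n) ℝ) *
      Matrix.diagonal (fun i => (h.eigenvalues i) ^ r) *
      (star (h.eigenvectorUnitary : Matrix (Fin n) (Fin n) ℝ))
  else 0

section

variable {n : ℕ} {S : Matrix (Fin n) (Fin n) ℝ}

lemma matRpow_eq_cfc (hS : S.IsHermitian) (r : ℝ) :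
    matRpow S r = cfc (fun x : ℝ => x ^ r) S := by
  rw [hS.cfc_eq, matRpow, dif_pos hS, Matrix.IsHermitian.cfc]
  rfl

lemma matRpow_add (hS : S.PosDef) (a b : ℝ) :
    matRpow S (a + b) = matRpow S a * matRpow S b := by
  have hcont := fun f : ℝ → ℝ => Matrix.finite_real_spectrum (A := S).continuousOn f
  simp only [matRpow_eq_cfc hS.isHermitian]
  rw [← cfc_mul _ _ S (hcont _) (hcont _)]
  refine cfc_congr fun x hx => Real.rpow_add ?_ a b
  obtain ⟨i, rfl⟩ := hS.isHermitian.spectrum_real_eq_range_eigenvalues ▸ hx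
  exact hS.eigenvalues_pos i

lemma matRpow_one (hS : S.IsHermitian) : matRpow S 1 = S := by
  simp only [matRpow_eq_cfc hS, Real.rpow_one]
  exact cfc_id' ℝ S

lemma matRpow_zero (hS : S.IsHermitian) : matRpow S 0 = 1 := by
  simp only [matRpow_eq_cfc hS, Real.rpow_zero]
  exact cfc_const_one ℝ S

lemma matRpow_neg_one (hS : S.PosDef) : matRpow S (-1) = S⁻¹ := by
  have h := matRpow_add hS (-1) 1
  rw [neg_add_cancel, matRpow_zero hS.isHermitian, matRpow_one hS.isHermitian] at h
  exact (inv_eq_left_inv h.symm).symm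

lemma trace_matRpow_mul_conj (hS : S.PosDef) (a b c : ℝ) (Y : Matrix (Fin n) (Fin n) ℝ) :
    (matRpow S c * (matRpow S a * Y * matRpow S b)).trace =
      (matRpow S (b + c + a) * Y).trace := by
  rw [matRpow_add hS, matRpow_add hS, ← mul_assoc, Matrix.trace_mul_comm]
  simp only [mul_assoc]

end

theorem stmt13_general (n : ℕ) (p : ℕ)
    (S : Matrix (Fin n) (Fin n) ℝ) (hS : S.PosDef)
    (D : Matrix (Fin n) (Fin n) ℝ → Matrix (Fin n) (Fin n) ℝ)
    (hD : ∀ X : Matrix (Fin n) (Fin n) ℝ, X.IsSymm →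
      ∑ j ∈ Finset.range p,
        matRpow S (((p : ℝ) - 1 - j) / p) * D X * matRpow S ((j : ℝ) / p) = X) :
    ∀ X : Matrix (Fin n) (Fin n) ℝ, X.IsSymm →
      (p : ℝ) * (matRpow S (-(1 / p)) * D X).trace = (S⁻¹ * X).trace := by
  intro X hX
  have hterm : ∀ j ∈ Finset.range p, (S⁻¹ *
      (matRpow S (((p : ℝ) - 1 - j) / p) * D X * matRpow S ((j : ℝ) / p))).trace =
      (matRpow S (-(1 / p)) * D X).trace := by
    intro j hj
    have hp : (p : ℝ) ≠ 0 := Nat.cast_ne_zero.mpr (Nat.ne_zero_of_lt (Finset.mem_range.mp hj))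
    rw [← matRpow_neg_one hS, trace_matRpow_mul_conj hS]
    congr 3
    field_simp
    ring
  calc (p : ℝ) * (matRpow S (-(1 / p)) * D X).trace
      = ∑ _j ∈ Finset.range p, (matRpow S (-(1 / p)) * D X).trace := by simp
    _ = ∑ j ∈ Finset.range p, (S⁻¹ *
          (matRpow S (((p : ℝ) - 1 - j) / p) * D X * matRpow S ((j : ℝ) / p))).trace :=
        (Finset.sum_congr rfl hterm).symm
    _ = (S⁻¹ * X).trace := by rw [← Matrix.trace_sum, ← Finset.mul_sum, hD X hX]

/-- If `D` solves the generalized Sylvester equation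
`∑_{j=0}^{p-1} S^{(p-1-j)/p} (DX) S^{j/p} = X` (the differential of the p-th
root map at S), then `p·tr(S^{-1/p}·DX) = tr(S⁻¹X)` for every symmetric X. -/
theorem stmt13 (n : ℕ) (p : ℕ) (hp : 0 < p)
    (S : Matrix (Fin n) (Fin n) ℝ) (hS : S.PosDef)
    (D : Matrix (Fin n) (Fin n) ℝ → Matrix (Fin n) (Fin n) ℝ)
    (hD : ∀ X : Matrix (Fin n) (Fin n) ℝ, X.IsSymm →
      ∑ j ∈ Finset.range p,
        matRpow S (((p : ℝ) - 1 - j) / p) * D X * matRpow S ((j : ℝ) / p) = X) :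
    ∀ X : Matrix (Fin n) (Fin n) ℝ, X.IsSymm →
      (p : ℝ) * (matRpow S (-(1 / p)) * D X).trace = (S⁻¹ * X).trace :=
  stmt13_general n p S hS D hD
end
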